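/- arXiv:2303.10640 — 2 statements merged into one kernel-verified Lean document; each statement's English description precedes it below -/
import Mathlib

section
/- Let d ≥ 1, q ≥ 2, Ω = {1,…,q}^{ℤ^d} with the Borel σ-algebra, and let ν be a probability measure on Ω with ν([η_{Λ_n}]) > 0 for all n and all η. For each x ∈ ℤ^d and j ∈ {1,…,q}, let c_x(·, j) : Ω → ℝ be bounded measurable with inf c_x ≥ δ > 0, and define Γ_n(x, j, η) = ∫_{[η_{Λ_n}]} c_x(ω, j) dν(ω), α_n(x) = Σ_{η_{Λ_n}} Σ_{i ≠ η_x} Φ( Γ_n(x, η_x, η^{x,i}), Γ_n(x, i, η) ), and β_n(x) = Σ_{η_{Λ_n}} Σ_{i ≠ η_x} | Γ_n(x, η_x, η^{x,i}) − Γ_n(x, i, η) |. Then for every n ≥ 1 and x ∈ Λ_n, β_n(x)² ≤ q · ( sup_{ω ∈ Ω, j} c_x(ω, j) ) · α_n(x). -/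
/-!
Since the logarithmic mean `(u - v) / (log u - log v)` is at most the arithmetic mean, each term
satisfies `(u - v)² ≤ Φ(u, v) (u + v) / 2`, and Cauchy–Schwarz gives
`β_n(x)² ≤ α_n(x) · ∑ (Γ_n(x, η_x, η^{x,i}) + Γ_n(x, i, η)) / 2`.
The involution `(η, i) ↦ (η^{x,i}, η_x)` of `{(η, i) | i ≠ η_x}` exchanges the two summands, so
this sum is `∑_η ∑_{i ≠ η_x} Γ_n(x, i, η) ≤ ∑_i ∫ c_x(·, i) dν ≤ q sup c_x`, the cylinders
partitioning `Ω`.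
-/

open MeasureTheory

/-- The centred box `Λ_n = ([-n,n] ∩ ℤ)^d` in `ℤ^d`. -/
noncomputable def centredBox (d : ℕ) (n : ℕ) : Finset (Fin d → ℤ) :=
  Fintype.piFinset fun _ => Finset.Icc (-(n : ℤ)) (n : ℤ)

/-- The cylinder set `[η_{Λ_n}]` determined by a configuration `σ` on `Λ_n`. -/
def cylinder (d q n : ℕ) (σ : ↥(centredBox d n) → Fin q) :
    Set ((Fin d → ℤ) → Fin q) :=
  {ω | ∀ z : ↥(centredBox d n), ω z.1 = σ z}

/-- `Γ_n(x, j, η) = ∫_{[η_{Λ_n}]} c_x(ω, j) dν(ω)`. -/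
noncomputable def Gamma (d q : ℕ) (ν : Measure ((Fin d → ℤ) → Fin q))
    (c : (Fin d → ℤ) → Fin q → ((Fin d → ℤ) → Fin q) → ℝ) (n : ℕ)
    (x : Fin d → ℤ) (j : Fin q) (σ : ↥(centredBox d n) → Fin q) : ℝ :=
  ∫ ω in cylinder d q n σ, c x j ω ∂ν

/-- The kernel `Φ(u,v) = (u − v)(log u − log v)`. -/
noncomputable def Phi (u v : ℝ) : ℝ := (u - v) * (Real.log u - Real.log v)

/-- `α_n(x) = Σ_{η_{Λ_n}} Σ_{i ≠ η_x} Φ(Γ_n(x, η_x, η^{x,i}), Γ_n(x, i, η))`. -/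
noncomputable def alpha (d q : ℕ) (ν : Measure ((Fin d → ℤ) → Fin q))
    (c : (Fin d → ℤ) → Fin q → ((Fin d → ℤ) → Fin q) → ℝ) (n : ℕ)
    (x : Fin d → ℤ) : ℝ :=
  if hx : x ∈ centredBox d n then
    ∑ σ : ↥(centredBox d n) → Fin q,
      ∑ i ∈ Finset.univ.filter fun i : Fin q => i ≠ σ ⟨x, hx⟩,
        Phi (Gamma d q ν c n x (σ ⟨x, hx⟩) (Function.update σ ⟨x, hx⟩ i))
          (Gamma d q ν c n x i σ)
  else 0

/-- `β_n(x) = Σ_{η_{Λ_n}} Σ_{i ≠ η_x} |Γ_n(x, η_x, η^{x,i}) − Γ_n(x, i, η)|`. -/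
noncomputable def beta (d q : ℕ) (ν : Measure ((Fin d → ℤ) → Fin q))
    (c : (Fin d → ℤ) → Fin q → ((Fin d → ℤ) → Fin q) → ℝ) (n : ℕ)
    (x : Fin d → ℤ) : ℝ :=
  if hx : x ∈ centredBox d n then
    ∑ σ : ↥(centredBox d n) → Fin q,
      ∑ i ∈ Finset.univ.filter fun i : Fin q => i ≠ σ ⟨x, hx⟩,
        |Gamma d q ν c n x (σ ⟨x, hx⟩) (Function.update σ ⟨x, hx⟩ i) -
          Gamma d q ν c n x i σ|
  else 0

namespace Real

theorem two_mul_sub_le_add_mul_log_sub_log {a b : ℝ} (hb : 0 < b) (hba : b ≤ a) :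
    2 * (a - b) ≤ (a + b) * (log a - log b) := by
  have hab : 0 < a + b := by linarith
  set t := (a - b) / (a + b) with ht
  have ht0 : 0 ≤ t := div_nonneg (by linarith) hab.le
  have ht1 : t < 1 := by rw [div_lt_one hab]; linarith
  have hlog : log (1 + t) - log (1 - t) = log a - log b := by
    rw [← log_div (by linarith) (by linarith), ← log_div (by linarith) hb.ne']
    congr 1
    rw [div_eq_div_iff (by linarith) hb.ne', ht]
    field_simp
    ring
  -- `log ((1 + t) / (1 - t)) = ∑ 2 t ^ (2k+1) / (2k+1)`, and its first term is `2 t`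
  have hfirst := le_hasSum (hasSum_log_sub_log_of_abs_lt_one (abs_lt.2 ⟨by linarith, ht1⟩)) 0
    fun k _ => by positivity
  simp only [CharP.cast_eq_zero, mul_zero, zero_add, div_one, mul_one, pow_one, hlog] at hfirst
  calc 2 * (a - b) = (a + b) * (2 * t) := by rw [ht]; field_simp
    _ ≤ (a + b) * (log a - log b) := mul_le_mul_of_nonneg_left hfirst hab.le

end Real

theorem Phi_comm (u v : ℝ) : Phi u v = Phi v u := by
  unfold Phi
  ring

theorem Phi_nonneg {u v : ℝ} (hu : 0 < u) (hv : 0 < v) : 0 ≤ Phi u v := by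
  wlog h : v ≤ u generalizing u v
  · rw [Phi_comm]
    exact this hv hu (le_of_not_ge h)
  exact mul_nonneg (sub_nonneg.2 h) (sub_nonneg.2 (Real.log_le_log hv h))

theorem sq_sub_le_Phi_mul_add_div_two {u v : ℝ} (hu : 0 < u) (hv : 0 < v) :
    (u - v) ^ 2 ≤ Phi u v * ((u + v) / 2) := by
  wlog h : v ≤ u generalizing u v
  · rw [Phi_comm, add_comm, ← neg_sub, neg_sq]
    exact this hv hu (le_of_not_ge h)
  have := Real.two_mul_sub_le_add_mul_log_sub_log hv h
  unfold Phi
  nlinarith [sub_nonneg.2 h]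

theorem sq_sum_abs_sub_le_sum_Phi_mul_sum {ι : Type*} (s : Finset ι) {u v : ι → ℝ}
    (hu : ∀ i ∈ s, 0 < u i) (hv : ∀ i ∈ s, 0 < v i) :
    (∑ i ∈ s, |u i - v i|) ^ 2 ≤ (∑ i ∈ s, Phi (u i) (v i)) * ∑ i ∈ s, (u i + v i) / 2 :=
  Finset.sum_sq_le_sum_mul_sum_of_sq_le_mul s (fun i hi => Phi_nonneg (hu i hi) (hv i hi))
    (fun i hi => by linarith [hu i hi, hv i hi])
    (fun i hi => (sq_abs _).trans_le (sq_sub_le_Phi_mul_add_div_two (hu i hi) (hv i hi)))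

theorem sum_sum_ne_update_eq {ι α M : Type*} [Fintype ι] [DecidableEq ι] [Fintype α]
    [DecidableEq α] [AddCommMonoid M] (x : ι) (f : (ι → α) → α → M) :
    ∑ σ : ι → α, ∑ i ∈ Finset.univ.filter (· ≠ σ x), f (Function.update σ x i) (σ x) =
      ∑ σ : ι → α, ∑ i ∈ Finset.univ.filter (· ≠ σ x), f σ i := by
  simp only [Finset.sum_sigma']
  refine Finset.sum_nbij' (fun k => ⟨Function.update k.1 x k.2, k.1 x⟩)
    (fun k => ⟨Function.update k.1 x k.2, k.1 x⟩) ?_ ?_ ?_ ?_ ?_ <;>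
  simp +contextual [Function.update_idem, eq_comm]

section Cylinder

variable {d q n : ℕ}

theorem measurableSet_cylinder (σ : ↥(centredBox d n) → Fin q) :
    MeasurableSet (cylinder d q n σ) := by
  have : cylinder d q n σ = ⋂ z : ↥(centredBox d n), (fun ω => ω z.1) ⁻¹' {σ z} := by
    ext ω
    simp [_root_.cylinder]
  rw [this]
  exact .iInter fun z => measurable_pi_apply _ (measurableSet_singleton _)

open Function in
theorem pairwise_disjoint_cylinder : Pairwise (Disjoint on (_root_.cylinder d q n)) :=
  fun _ _ hne => Set.disjoint_left.2 fun _ hσ hτ => hne (funext fun z => (hσ z).symm.trans (hτ z))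

theorem iUnion_cylinder : ⋃ σ, cylinder d q n σ = Set.univ :=
  Set.eq_univ_of_forall fun ω => Set.mem_iUnion.2 ⟨fun z => ω z.1, fun _ => rfl⟩

theorem sum_setIntegral_cylinder {ν : Measure ((Fin d → ℤ) → Fin q)}
    {f : ((Fin d → ℤ) → Fin q) → ℝ} (hf : Integrable f ν) :
    ∑ σ, ∫ ω in cylinder d q n σ, f ω ∂ν = ∫ ω, f ω ∂ν := by
  rw [← integral_iUnion_fintype measurableSet_cylinder pairwise_disjoint_cylinder
    fun _ => hf.integrableOn, iUnion_cylinder, setIntegral_univ]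

end Cylinder

section Gamma

variable {d q n : ℕ} {ν : Measure ((Fin d → ℤ) → Fin q)}
  {c : (Fin d → ℤ) → Fin q → ((Fin d → ℤ) → Fin q) → ℝ} {x : Fin d → ℤ} {j : Fin q}

theorem Gamma_pos [IsFiniteMeasure ν] {σ : ↥(centredBox d n) → Fin q}
    (hσ : 0 < ν (cylinder d q n σ)) (hc : Integrable (c x j) ν) {δ : ℝ} (hδ : 0 < δ)
    (hδc : ∀ ω, δ ≤ c x j ω) : 0 < Gamma d q ν c n x j σ :=
  (mul_pos hδ (ENNReal.toReal_pos hσ.ne' (measure_ne_top _ _))).trans_le <|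
    setIntegral_ge_of_const_le_real (measurableSet_cylinder σ) (measure_ne_top _ _)
      (fun ω _ => hδc ω) hc.integrableOn

theorem sum_Gamma_le [IsProbabilityMeasure ν] (hc : Integrable (c x j) ν) {M : ℝ}
    (hcM : ∀ ω, c x j ω ≤ M) : ∑ σ, Gamma d q ν c n x j σ ≤ M := by
  simp only [Gamma]
  rw [sum_setIntegral_cylinder hc]
  simpa using integral_mono hc (integrable_const M) hcM

end Gamma

theorem beta_sq_le_general (d q : ℕ)
    (ν : Measure ((Fin d → ℤ) → Fin q)) [IsProbabilityMeasure ν]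
    (hν : ∀ (n : ℕ) (σ : ↥(centredBox d n) → Fin q), 0 < ν (cylinder d q n σ))
    (c : (Fin d → ℤ) → Fin q → ((Fin d → ℤ) → Fin q) → ℝ)
    (hc_meas : ∀ x j, Measurable (c x j))
    (hc_bdd : ∀ x, ∃ M : ℝ, ∀ j ω, c x j ω ≤ M)
    (δ : ℝ) (hδ : 0 < δ) (hc_lb : ∀ x j ω, δ ≤ c x j ω)
    (n : ℕ) (x : Fin d → ℤ) (hx : x ∈ centredBox d n) :
    beta d q ν c n x ^ 2 ≤
      (q : ℝ) * (⨆ p : ((Fin d → ℤ) → Fin q) × Fin q, c x p.2 p.1) *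
        alpha d q ν c n x := by
  set S := ⨆ p : ((Fin d → ℤ) → Fin q) × Fin q, c x p.2 p.1
  have hcS : ∀ j ω, c x j ω ≤ S := by
    obtain ⟨M, hM⟩ := hc_bdd x
    exact fun j ω => le_ciSup (f := fun p : ((Fin d → ℤ) → Fin q) × Fin q => c x p.2 p.1)
      ⟨M, Set.forall_mem_range.2 fun p => hM p.2 p.1⟩ (ω, j)
  have hint : ∀ j, Integrable (c x j) ν := fun j =>
    .of_bound (hc_meas x j).aestronglyMeasurable S <| ae_of_all _ fun ω => by
      rw [Real.norm_of_nonneg (hδ.le.trans (hc_lb x j ω))]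
      exact hcS j ω
  have hpos : ∀ j σ, 0 < Gamma d q ν c n x j σ := fun j σ =>
    Gamma_pos (hν n σ) (hint j) hδ (hc_lb x j)
  have hmass : ∑ σ, ∑ i ∈ Finset.univ.filter (· ≠ σ ⟨x, hx⟩), Gamma d q ν c n x i σ ≤ q * S :=
    calc _ ≤ ∑ σ, ∑ i, Gamma d q ν c n x i σ := Finset.sum_le_sum fun σ _ =>
          Finset.sum_le_sum_of_subset_of_nonneg (Finset.filter_subset _ _)
            fun i _ _ => (hpos i σ).le
      _ = ∑ i, ∑ σ, Gamma d q ν c n x i σ := Finset.sum_comm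
      _ ≤ ∑ _i : Fin q, S := Finset.sum_le_sum fun i _ => sum_Gamma_le (hint i) (hcS i)
      _ = q * S := by simp
  have hflip := sum_sum_ne_update_eq ⟨x, hx⟩ fun σ j => Gamma d q ν c n x j σ
  rw [beta, alpha, dif_pos hx, dif_pos hx, Finset.sum_sigma', Finset.sum_sigma']
  refine (sq_sum_abs_sub_le_sum_Phi_mul_sum _ (fun _ _ => hpos _ _) fun _ _ => hpos _ _).trans ?_
  rw [mul_comm]
  refine mul_le_mul_of_nonneg_right ?_
    (Finset.sum_nonneg fun _ _ => Phi_nonneg (hpos _ _) (hpos _ _))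
  rw [← Finset.sum_div, Finset.sum_add_distrib, Finset.sum_sigma, Finset.sum_sigma, hflip,
    add_self_div_two]
  exact hmass

/-- The estimate `β_n(x)² ≤ q · (sup_{ω, j} c_x(ω, j)) · α_n(x)`. -/
theorem beta_sq_le (d q : ℕ) (hd : 1 ≤ d) (hq : 2 ≤ q)
    (ν : Measure ((Fin d → ℤ) → Fin q)) [IsProbabilityMeasure ν]
    (hν : ∀ (n : ℕ) (σ : ↥(centredBox d n) → Fin q), 0 < ν (cylinder d q n σ))
    (c : (Fin d → ℤ) → Fin q → ((Fin d → ℤ) → Fin q) → ℝ)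
    (hc_meas : ∀ x j, Measurable (c x j))
    (hc_bdd : ∀ x, ∃ M : ℝ, ∀ j ω, c x j ω ≤ M)
    (δ : ℝ) (hδ : 0 < δ) (hc_lb : ∀ x j ω, δ ≤ c x j ω)
    (n : ℕ) (hn : 1 ≤ n) (x : Fin d → ℤ) (hx : x ∈ centredBox d n) :
    beta d q ν c n x ^ 2 ≤
      (q : ℝ) * (⨆ p : ((Fin d → ℤ) → Fin q) × Fin q, c x p.2 p.1) *
        alpha d q ν c n x :=
  beta_sq_le_general d q ν hν c hc_meas hc_bdd δ hδ hc_lb n x hx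
end

section
/- Let d ∈ {1,2}. For each n ≥ 1 let Λ_n = ([−n,n] ∩ ℤ)^d, and let α_n, ρ_n : ℤ^d → ℝ be nonnegative functions. Assume: (i) for all n ≥ 1 and all x ∈ Λ_n, α_n(x) ≤ α_{n+1}(x); (ii) there is C > 0 with Σ_{x ∈ Λ_n} α_n(x) ≤ C Σ_{x ∈ Λ_n} ρ_n(x) √(α_n(x)) for all n ≥ 1; (iii) C₁ := sup_{x ∈ ℤ^d} Σ_{n=1}^{∞} ρ_n(x) < ∞; (iv) C₂ := sup_{n ≥ 1} n^{-(d−1)} Σ_{x ∈ Λ_n} ρ_n(x) < ∞. Then α_n(x) = 0 for every n ≥ 1 and every x ∈ Λ_n. -/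
/-!
Put `δ_n = Σ_{x ∈ Λ_n} ρ_n(x) α_n(x)` and `S_n = δ_0 + ⋯ + δ_n`. Cauchy–Schwarz, the monotonicity
of `α` and the bound on `Σ_n ρ_n(x)` give `S_n² ≤ K (n + 1) (S_n - S_{n-1})`, where the factor
`n + 1` dominates `n^{d-1}` exactly when `d ≤ 2`. Once some `δ_n > 0`, the sequence `K / S` then
decreases by at least `1 / (j + 1)` at every later step `j`, which would make the harmonic series
converge.
-/

open Finset

lemma centredBox_mono (d : ℕ) : Monotone (centredBox d) := fun _ _ h =>
  Fintype.piFinset_subset _ _ fun _ => Icc_subset_Icc (by simpa) (by simpa)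

lemma summable_of_le_sub_succ {g u : ℕ → ℝ} (hg : ∀ n, 0 ≤ g n) (hu : ∀ n, 0 ≤ u n)
    (h : ∀ n, g n ≤ u n - u (n + 1)) : Summable g :=
  summable_of_sum_range_le hg fun n =>
    calc ∑ i ∈ range n, g i ≤ ∑ i ∈ range n, (u i - u (i + 1)) := sum_le_sum fun i _ => h i
      _ = u 0 - u n := sum_range_sub' u n
      _ ≤ u 0 := sub_le_self _ (hu n)

lemma inv_le_div_sub_div_of_sq_le {s t K c : ℝ} (hs : 0 < s) (hst : s ≤ t) (hc : 0 < c)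
    (h : t ^ 2 ≤ K * c * (t - s)) : c⁻¹ ≤ K / s - K / t := by
  have ht : 0 < t := hs.trans_le hst
  rw [div_sub_div _ _ hs.ne' ht.ne', inv_le_iff_one_le_mul₀ hc, div_mul_eq_mul_div,
    one_le_div (mul_pos hs ht)]
  nlinarith [mul_le_mul_of_nonneg_right hst ht.le]

theorem eq_zero_of_sq_sum_range_le {a : ℕ → ℝ} {K : ℝ} (ha : ∀ n, 0 ≤ a n)
    (h : ∀ n, (∑ k ∈ range (n + 1), a k) ^ 2 ≤ K * (n + 1) * a n) (n : ℕ) : a n = 0 := by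
  by_contra hn
  set S : ℕ → ℝ := fun n => ∑ k ∈ range (n + 1), a k
  have hS_mono : Monotone S := fun i j hij =>
    sum_le_sum_of_subset_of_nonneg (range_subset_range.2 (by omega)) fun k _ _ => ha k
  have hS_sub : ∀ i, S (i + 1) - S i = a (i + 1) := fun i =>
    sub_eq_of_eq_add' (sum_range_succ a (i + 1))
  have hS_pos : ∀ i, n ≤ i → 0 < S i := fun i hi =>
    ((ha n).lt_of_ne' hn).trans_le <|
      (single_le_sum (fun k _ => ha k) (self_mem_range_succ n)).trans (hS_mono hi)
  have hK : 0 ≤ K :=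
    (pos_of_mul_pos_left (pos_of_mul_pos_left ((pow_pos (hS_pos n le_rfl) 2).trans_le (h n))
      (ha n)) n.cast_add_one_pos.le).le
  have hharmonic : Summable fun i : ℕ => ((i + (n + 2) : ℕ) : ℝ)⁻¹ := by
    refine summable_of_le_sub_succ (fun i => by positivity)
      (fun i => div_nonneg hK (hS_pos (i + n) (by omega)).le) fun i => ?_
    refine inv_le_div_sub_div_of_sq_le (hS_pos (i + n) (by omega)) (hS_mono (by omega))
      (by positivity) ?_
    rw [show i + 1 + n = i + n + 1 by omega, hS_sub]
    convert h (i + n + 1) using 3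
    push_cast
    ring
  exact Real.not_summable_natCast_inv ((summable_nat_add_iff (n + 2)).1 hharmonic)

lemma sq_sum_le_of_le_mul_sum_mul_sqrt {ι : Type*} {s : Finset ι} {a r : ι → ℝ} {C : ℝ}
    (ha : ∀ i ∈ s, 0 ≤ a i) (hr : ∀ i ∈ s, 0 ≤ r i)
    (h : ∑ i ∈ s, a i ≤ C * ∑ i ∈ s, r i * √(a i)) :
    (∑ i ∈ s, a i) ^ 2 ≤ C ^ 2 * ((∑ i ∈ s, r i) * ∑ i ∈ s, r i * a i) :=
  calc (∑ i ∈ s, a i) ^ 2 ≤ (C * ∑ i ∈ s, r i * √(a i)) ^ 2 := by gcongr; exact sum_nonneg ha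
    _ = C ^ 2 * (∑ i ∈ s, r i * √(a i)) ^ 2 := mul_pow _ _ _
    _ ≤ C ^ 2 * ((∑ i ∈ s, r i) * ∑ i ∈ s, r i * a i) := by
      gcongr
      refine sum_sq_le_sum_mul_sum_of_sq_le_mul s hr (fun i hi => mul_nonneg (hr i hi) (ha i hi))
        fun i hi => ?_
      rw [mul_pow, Real.sq_sqrt (ha i hi), sq, mul_assoc]

section Exhaustion

variable {ι : Type*} {Λ : ℕ → Finset ι} {α ρ : ℕ → ι → ℝ}

lemma le_apply_of_le_of_mem (hΛ : Monotone Λ) (hmono : ∀ n, ∀ x ∈ Λ n, α n x ≤ α (n + 1) x)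
    {k n : ℕ} (hkn : k ≤ n) {x : ι} (hx : x ∈ Λ k) : α k x ≤ α n x := by
  induction n, hkn using Nat.le_induction with
  | base => rfl
  | succ n hkn ih => exact ih.trans (hmono n x (hΛ hkn hx))

lemma sum_range_sum_mul_le_mul_sum (hΛ : Monotone Λ) (hα : ∀ n x, 0 ≤ α n x)
    (hρ : ∀ n x, 0 ≤ ρ n x) (hmono : ∀ n, ∀ x ∈ Λ n, α n x ≤ α (n + 1) x)
    (hsum : ∀ x, Summable (ρ · x)) {C₁ : ℝ} (hC₁ : ∀ x, ∑' n, ρ n x ≤ C₁) (n : ℕ) :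
    ∑ k ∈ range (n + 1), ∑ x ∈ Λ k, ρ k x * α k x ≤ C₁ * ∑ x ∈ Λ n, α n x :=
  calc ∑ k ∈ range (n + 1), ∑ x ∈ Λ k, ρ k x * α k x
      ≤ ∑ k ∈ range (n + 1), ∑ x ∈ Λ n, ρ k x * α n x := by
        refine sum_le_sum fun k hk => ?_
        have hkn : k ≤ n := Nat.lt_succ_iff.1 (mem_range.1 hk)
        refine (sum_le_sum fun x hx => ?_).trans <|
          sum_le_sum_of_subset_of_nonneg (hΛ hkn) fun x _ _ => mul_nonneg (hρ k x) (hα n x)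
        exact mul_le_mul_of_nonneg_left (le_apply_of_le_of_mem hΛ hmono hkn hx) (hρ k x)
    _ = ∑ x ∈ Λ n, (∑ k ∈ range (n + 1), ρ k x) * α n x := by
        rw [sum_comm]
        simp only [sum_mul]
    _ ≤ ∑ x ∈ Λ n, C₁ * α n x := by
        gcongr with x
        · exact hα n x
        · exact ((hsum x).sum_le_tsum _ fun k _ => hρ k x).trans (hC₁ x)
    _ = C₁ * ∑ x ∈ Λ n, α n x := (mul_sum _ _ _).symm

theorem eq_zero_of_sum_le_mul_sum_mul_sqrt (hΛ : Monotone Λ) (hα : ∀ n x, 0 ≤ α n x)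
    (hρ : ∀ n x, 0 ≤ ρ n x) (hmono : ∀ n, ∀ x ∈ Λ n, α n x ≤ α (n + 1) x) {C : ℝ}
    (hCS : ∀ n, ∑ x ∈ Λ n, α n x ≤ C * ∑ x ∈ Λ n, ρ n x * √(α n x))
    (hsum : ∀ x, Summable (ρ · x)) {C₁ : ℝ} (hC₁ : ∀ x, ∑' n, ρ n x ≤ C₁) {C₂ : ℝ}
    (hC₂ : ∀ n, ∑ x ∈ Λ n, ρ n x ≤ C₂ * (n + 1)) (n : ℕ) : ∀ x ∈ Λ n, α n x = 0 := by
  set δ : ℕ → ℝ := fun n => ∑ x ∈ Λ n, ρ n x * α n x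
  have hδ_nonneg : ∀ n, 0 ≤ δ n := fun n => sum_nonneg fun x _ => mul_nonneg (hρ n x) (hα n x)
  have hA : ∀ n, (∑ x ∈ Λ n, α n x) ^ 2 ≤ C ^ 2 * ((∑ x ∈ Λ n, ρ n x) * δ n) := fun n =>
    sq_sum_le_of_le_mul_sum_mul_sqrt (fun x _ => hα n x) (fun x _ => hρ n x) (hCS n)
  have hδ : ∀ n, δ n = 0 := eq_zero_of_sq_sum_range_le hδ_nonneg fun n =>
    calc (∑ k ∈ range (n + 1), δ k) ^ 2 ≤ (C₁ * ∑ x ∈ Λ n, α n x) ^ 2 := by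
          gcongr
          · exact sum_nonneg fun k _ => hδ_nonneg k
          · exact sum_range_sum_mul_le_mul_sum hΛ hα hρ hmono hsum hC₁ n
      _ = C₁ ^ 2 * (∑ x ∈ Λ n, α n x) ^ 2 := mul_pow _ _ _
      _ ≤ C₁ ^ 2 * (C ^ 2 * (C₂ * (n + 1) * δ n)) := by
          gcongr
          exact (hA n).trans (by gcongr; exacts [hδ_nonneg n, hC₂ n])
      _ = C₁ ^ 2 * C ^ 2 * C₂ * (n + 1) * δ n := by ring
  have hA_zero : ∑ x ∈ Λ n, α n x = 0 := by
    simpa [hδ n] using hA n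
  exact (sum_eq_zero_iff_of_nonneg fun x _ => hα n x).1 hA_zero

end Exhaustion

theorem holley_stroock_quantitative_general (d : ℕ) (hd : d = 1 ∨ d = 2)
    (α ρ : ℕ → (Fin d → ℤ) → ℝ)
    (hα : ∀ n x, 0 ≤ α n x) (hρ : ∀ n x, 0 ≤ ρ n x)
    (hmono : ∀ n, 1 ≤ n → ∀ x ∈ centredBox d n, α n x ≤ α (n + 1) x)
    (C : ℝ)
    (hCS : ∀ n, 1 ≤ n →
      ∑ x ∈ centredBox d n, α n x ≤
        C * ∑ x ∈ centredBox d n, ρ n x * Real.sqrt (α n x))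
    (hsum : ∀ x, Summable fun n => ρ (n + 1) x)
    (C₁ : ℝ) (hC₁ : ∀ x, ∑' n : ℕ, ρ (n + 1) x ≤ C₁)
    (C₂ : ℝ) (hC₂ : ∀ n, 1 ≤ n →
      ∑ x ∈ centredBox d n, ρ n x ≤ C₂ * (n : ℝ) ^ (d - 1)) :
    ∀ n, 1 ≤ n → ∀ x ∈ centredBox d n, α n x = 0 := by
  have hC₂_nonneg : 0 ≤ C₂ := by
    simpa using (sum_nonneg fun x _ => hρ 1 x).trans (hC₂ 1 le_rfl)
  have hC₂_linear : ∀ n : ℕ, ∑ x ∈ centredBox d (n + 1), ρ (n + 1) x ≤ C₂ * (n + 1) := by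
    intro n
    refine (hC₂ (n + 1) (Nat.le_add_left 1 n)).trans ?_
    push_cast
    gcongr
    exact (pow_le_pow_right₀ (le_add_of_nonneg_left n.cast_nonneg) (by omega)).trans_eq
      (pow_one _)
  intro n hn
  obtain ⟨n, rfl⟩ := Nat.exists_eq_add_of_le' hn
  exact eq_zero_of_sum_le_mul_sum_mul_sqrt (Λ := fun n => centredBox d (n + 1))
    (α := fun n => α (n + 1)) (ρ := fun n => ρ (n + 1))
    (fun _ _ h => centredBox_mono d (by omega)) (fun n => hα (n + 1)) (fun n => hρ (n + 1))
    (fun n => hmono (n + 1) (Nat.le_add_left 1 n)) (fun n => hCS (n + 1) (Nat.le_add_left 1 n))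
    hsum hC₁ hC₂_linear n

/-- The abstract quantitative argument of the Holley–Stroock principle in
dimensions `d ∈ {1,2}`: if the nonnegative quantities `α_n(x)` are monotone in
the volume, satisfy the Cauchy–Schwarz-type bound
`Σ_{x∈Λ_n} α_n(x) ≤ C Σ_{x∈Λ_n} ρ_n(x) √(α_n(x))`, and the nonnegative errors
`ρ_n(x)` satisfy `sup_x Σ_n ρ_n(x) ≤ C₁ < ∞` and
`Σ_{x∈Λ_n} ρ_n(x) ≤ C₂ n^{d−1}`, then `α_n(x) = 0` for all `n ≥ 1`, `x ∈ Λ_n`. -/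
theorem holley_stroock_quantitative (d : ℕ) (hd : d = 1 ∨ d = 2)
    (α ρ : ℕ → (Fin d → ℤ) → ℝ)
    (hα : ∀ n x, 0 ≤ α n x) (hρ : ∀ n x, 0 ≤ ρ n x)
    (hmono : ∀ n, 1 ≤ n → ∀ x ∈ centredBox d n, α n x ≤ α (n + 1) x)
    (C : ℝ) (hC : 0 < C)
    (hCS : ∀ n, 1 ≤ n →
      ∑ x ∈ centredBox d n, α n x ≤
        C * ∑ x ∈ centredBox d n, ρ n x * Real.sqrt (α n x))
    (hsum : ∀ x, Summable fun n => ρ (n + 1) x)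
    (C₁ : ℝ) (hC₁ : ∀ x, ∑' n : ℕ, ρ (n + 1) x ≤ C₁)
    (C₂ : ℝ) (hC₂ : ∀ n, 1 ≤ n →
      ∑ x ∈ centredBox d n, ρ n x ≤ C₂ * (n : ℝ) ^ (d - 1)) :
    ∀ n, 1 ≤ n → ∀ x ∈ centredBox d n, α n x = 0 :=
  holley_stroock_quantitative_general d hd α ρ hα hρ hmono C hCS hsum C₁ hC₁ C₂ hC₂
end
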